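/- Let f be a ratio-balanced maximum flow, assume A is nonempty, let R = max_{j∈A} r_j^f and assume R > 0. Let A' = {j ∈ A : r_j^f = R} and S' = {i ∈ S : f_{ij} > 0 for some j ∈ A'}. Then every security i ∈ S' is saturated: ∑_{j : (i,j)∈E} f_{ij} = v_i. -/

import Mathlib

open Finset
open scoped Classical

variable {S A : Type*} [Fintype S] [Fintype A]

/-- A feasible flow: nonnegative on edges, zero off edges, outflow of each security
bounded by its value, inflow of each account bounded by its exposure. -/
def Feasible (E : Finset (S × A)) (v : S → ℝ) (e : A → ℝ) (f : S → A → ℝ) : Prop :=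
  (∀ i j, (i, j) ∈ E → 0 ≤ f i j) ∧
  (∀ i j, (i, j) ∉ E → f i j = 0) ∧
  (∀ i : S, ∑ j ∈ Finset.univ.filter (fun j => (i, j) ∈ E), f i j ≤ v i) ∧
  (∀ j : A, ∑ i ∈ Finset.univ.filter (fun i => (i, j) ∈ E), f i j ≤ e j)

/-- The value of a flow: total flow on all edges. -/
noncomputable def flowValue (E : Finset (S × A)) (f : S → A → ℝ) : ℝ :=
  ∑ p ∈ E, f p.1 p.2

/-- The risk ratio of account `j` under a flow `f`. -/
noncomputable def riskRatio (E : Finset (S × A)) (e : A → ℝ) (f : S → A → ℝ) (j : A) : ℝ :=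
  (e j - ∑ i ∈ Finset.univ.filter (fun i => (i, j) ∈ E), f i j) / e j

/-- A maximum flow: feasible, with value maximal among feasible flows. -/
def IsMaxFlow (E : Finset (S × A)) (v : S → ℝ) (e : A → ℝ) (f : S → A → ℝ) : Prop :=
  Feasible E v e f ∧ ∀ g : S → A → ℝ, Feasible E v e g → flowValue E g ≤ flowValue E f

/-- The ratio constraint: if `f` sends positive flow from `i` to `j` and `i` could
also be used for `l`, then the risk ratio of `j` is at least that of `l`. -/
def RatioConstraint (E : Finset (S × A)) (e : A → ℝ) (f : S → A → ℝ) : Prop :=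
  ∀ i j l, (i, j) ∈ E → 0 < f i j → (i, l) ∈ E →
    riskRatio E e f l ≤ riskRatio E e f j

/-- A ratio-balanced (maximum) flow. -/
def RatioBalanced (E : Finset (S × A)) (v : S → ℝ) (e : A → ℝ) (f : S → A → ℝ) : Prop :=
  IsMaxFlow E v e f ∧ RatioConstraint E e f

/-- The weighted sum of squared risk ratios `∑ j, e j * (r_j^f)^2`. -/
noncomputable def objective (E : Finset (S × A)) (e : A → ℝ) (f : S → A → ℝ) : ℝ :=
  ∑ j : A, e j * (riskRatio E e f j) ^ 2

/-- An MWSR flow: a feasible flow minimizing the weighted sum of squared risk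
ratios among all feasible flows. -/
def MWSR (E : Finset (S × A)) (v : S → ℝ) (e : A → ℝ) (f : S → A → ℝ) : Prop :=
  Feasible E v e f ∧ ∀ g : S → A → ℝ, Feasible E v e g → objective E e f ≤ objective E e g

noncomputable def outflow (E : Finset (S × A)) (f : S → A → ℝ) (i : S) : ℝ :=
  ∑ j ∈ Finset.univ.filter (fun j => (i, j) ∈ E), f i j

noncomputable def inflow (E : Finset (S × A)) (f : S → A → ℝ) (j : A) : ℝ :=
  ∑ i ∈ Finset.univ.filter (fun i => (i, j) ∈ E), f i j

noncomputable def augmentEdge (f : S → A → ℝ) (i : S) (j : A) (ε : ℝ) : S → A → ℝ :=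
  fun a b => f a b + if (a, b) = (i, j) then ε else 0

section Augment

variable {E : Finset (S × A)} {f : S → A → ℝ} {i : S} {j : A} {ε : ℝ}

omit [Fintype S] in
theorem outflow_augmentEdge (hij : (i, j) ∈ E) (a : S) :
    outflow E (augmentEdge f i j ε) a = outflow E f a + if a = i then ε else 0 := by
  simp only [outflow, augmentEdge, Finset.sum_add_distrib, Prod.mk.injEq]
  split_ifs with ha
  · subst ha
    simp [Finset.sum_ite_eq', hij]
  · simp [ha]

omit [Fintype A] in
theorem inflow_augmentEdge (hij : (i, j) ∈ E) (b : A) :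
    inflow E (augmentEdge f i j ε) b = inflow E f b + if b = j then ε else 0 := by
  simp only [inflow, augmentEdge, Finset.sum_add_distrib, Prod.mk.injEq]
  split_ifs with hb
  · subst hb
    simp [Finset.sum_ite_eq', hij]
  · simp [hb]

omit [Fintype S] [Fintype A] in
theorem flowValue_augmentEdge (hij : (i, j) ∈ E) :
    flowValue E (augmentEdge f i j ε) = flowValue E f + ε := by
  simp [flowValue, augmentEdge, Finset.sum_add_distrib, Finset.sum_ite_eq', hij]

theorem Feasible.augmentEdge {v : S → ℝ} {e : A → ℝ} (hf : Feasible E v e f) (hij : (i, j) ∈ E)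
    (hε : 0 ≤ ε) (hεi : ε ≤ v i - outflow E f i) (hεj : ε ≤ e j - inflow E f j) :
    Feasible E v e (augmentEdge f i j ε) := by
  obtain ⟨hnonneg, hoff, hout, hin⟩ := hf
  refine ⟨fun a b hab => ?_, fun a b hab => ?_, fun a => ?_, fun b => ?_⟩
  · have := hnonneg a b hab
    simp only [_root_.augmentEdge]
    split_ifs <;> linarith
  · have hne : (a, b) ≠ (i, j) := fun h => hab (h ▸ hij)
    simp [_root_.augmentEdge, hoff a b hab, hne]
  · change outflow E _ a ≤ v a
    rw [outflow_augmentEdge hij]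
    have := hout a
    split_ifs with ha
    · subst ha; linarith
    · simpa [outflow] using this
  · change inflow E _ b ≤ e b
    rw [inflow_augmentEdge hij]
    have := hin b
    split_ifs with hb
    · subst hb; linarith
    · simpa [inflow] using this

end Augment

section MaxFlow

variable {E : Finset (S × A)} {v : S → ℝ} {e : A → ℝ} {f : S → A → ℝ}

theorem Feasible.outflow_le (hf : Feasible E v e f) (i : S) : outflow E f i ≤ v i :=
  hf.2.2.1 i

theorem Feasible.inflow_le (hf : Feasible E v e f) (j : A) : inflow E f j ≤ e j :=
  hf.2.2.2 j

theorem Feasible.mem_of_pos (hf : Feasible E v e f) {i : S} {j : A} (hij : 0 < f i j) :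
    (i, j) ∈ E := by
  by_contra h
  exact hij.ne' (hf.2.1 i j h)

theorem Feasible.inflow_lt_of_riskRatio_pos (hf : Feasible E v e f) {j : A}
    (hj : 0 < riskRatio E e f j) : inflow E f j < e j := by
  refine lt_of_le_of_ne (hf.inflow_le j) fun h => hj.ne' ?_
  rw [riskRatio, ← inflow, h, sub_self, zero_div]

/-- In a maximum flow every edge has a saturated endpoint: otherwise the flow could be
augmented along that edge. -/
theorem IsMaxFlow.outflow_eq_of_inflow_lt (hf : IsMaxFlow E v e f) {i : S} {j : A}
    (hij : (i, j) ∈ E) (hj : inflow E f j < e j) : outflow E f i = v i := by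
  by_contra hi
  have hi : outflow E f i < v i := lt_of_le_of_ne (hf.1.outflow_le i) hi
  set ε := min (v i - outflow E f i) (e j - inflow E f j)
  have hε : 0 < ε := lt_min (by linarith) (by linarith)
  have hg := hf.1.augmentEdge hij hε.le (min_le_left _ _) (min_le_right _ _)
  have := hf.2 _ hg
  rw [flowValue_augmentEdge hij] at this
  linarith

end MaxFlow

theorem Sprime_saturated_general (E : Finset (S × A)) (v : S → ℝ) (e : A → ℝ)
    (f : S → A → ℝ) (hf : RatioBalanced E v e f)
    (R : ℝ) (hRpos : 0 < R) :
    ∀ i : S, (∃ j : A, riskRatio E e f j = R ∧ 0 < f i j) →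
      ∑ j ∈ Finset.univ.filter (fun j => (i, j) ∈ E), f i j = v i := by
  rintro i ⟨j, rfl, hij⟩
  obtain ⟨hmax, -⟩ := hf
  exact hmax.outflow_eq_of_inflow_lt (hmax.1.mem_of_pos hij)
    (hmax.1.inflow_lt_of_riskRatio_pos hRpos)

/-- every security in `S'` (sending positive flow to a
least-secured account) is saturated. -/
theorem Sprime_saturated [Nonempty A] (E : Finset (S × A)) (v : S → ℝ) (e : A → ℝ)
    (hv : ∀ i, 0 ≤ v i) (he : ∀ j, 0 < e j)
    (f : S → A → ℝ) (hf : RatioBalanced E v e f)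
    (R : ℝ) (hRdef : R = Finset.univ.sup' Finset.univ_nonempty (riskRatio E e f))
    (hRpos : 0 < R) :
    ∀ i : S, (∃ j : A, riskRatio E e f j = R ∧ 0 < f i j) →
      ∑ j ∈ Finset.univ.filter (fun j => (i, j) ∈ E), f i j = v i :=
  Sprime_saturated_general E v e f hf R hRpos
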